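/- arXiv:math/0010289 — 3 statements merged into one kernel-verified Lean document; each statement's English description precedes it below -/
import Mathlib

section
/- Let r ∈ ℂ[[X,Y]] be a formal power series in two variables, let m ≥ 0, and in the ring ℂ[[x, a_0, …, a_m]] define h := r(x, Σ_{i=0}^m a_i x^i) (this substitution is well-defined since x and each monomial a_i x^i have zero constant term). Write h = Σ_{i=0}^∞ h_i x^i with h_i ∈ ℂ[[a_0, …, a_m]]. Then for all nonnegative integers i, j, k with 0 ≤ j ≤ m and 0 ≤ k + j − i ≤ m, one has ∂h_i/∂a_j = ∂h_k/∂a_{k+j−i} in ℂ[[a_0, …, a_m]]. -/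
noncomputable section

/-- The formal partial derivative of a multivariate formal power series with respect to the
variable `j`, defined coefficientwise. -/
def MvPowerSeries.pderivCoeffwise {σ : Type*} (j : σ) (f : MvPowerSeries σ ℂ) :
    MvPowerSeries σ ℂ :=
  fun e => ((e j : ℂ) + 1) * MvPowerSeries.coeff (e + Finsupp.single j 1) f

/-- Substitution of two formal power series `s₀, s₁` (intended to have zero constant term) for
the variables of a two-variable formal power series `r`, given by the closed coefficient
formula: the coefficient at a monomial `e` is
`∑_{p,q} r_{p,q} · (coefficient of e in s₀^p · s₁^q)`, the sum being finite because
`s₀^p · s₁^q` has no monomial of total degree `< p + q` when `s₀, s₁` have zero constant term. -/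
def MvPowerSeries.subst2 {σ : Type*} (s₀ s₁ : MvPowerSeries σ ℂ)
    (r : MvPowerSeries (Fin 2) ℂ) : MvPowerSeries σ ℂ :=
  fun e =>
    ∑ p ∈ Finset.range (e.sum (fun _ n => n) + 1) ×ˢ
        Finset.range (e.sum (fun _ n => n) + 1),
      (MvPowerSeries.coeff (Finsupp.single 0 p.1 + Finsupp.single 1 p.2) r) *
        MvPowerSeries.coeff e (s₀ ^ p.1 * s₁ ^ p.2)

/-- Viewing a formal power series in the variables `x, a₀, …, a_m` (with `x` the variable of
index `0` and `a_j` the variable of index `j+1`) as a power series in `x` with coefficients in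
`ℂ[[a₀, …, a_m]]`, this is the coefficient of `x^i`. -/
def MvPowerSeries.xCoeff {m : ℕ} (i : ℕ) (f : MvPowerSeries (Fin (m + 2)) ℂ) :
    MvPowerSeries (Fin (m + 1)) ℂ :=
  fun d => MvPowerSeries.coeff (Finsupp.single 0 i + d.mapDomain Fin.succ) f

open Finset Finsupp in
lemma prod_monomial_one {σ ι : Type*} (s : Finset ι) (u : ι → (σ →₀ ℕ)) :
    ∏ l ∈ s, MvPowerSeries.monomial (u l) (1:ℂ) =
      MvPowerSeries.monomial (∑ l ∈ s, u l) 1 := by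
  induction s using Finset.cons_induction with
  | empty => simp [MvPowerSeries.monomial_zero_one]
  | cons a s ha ih =>
      rw [Finset.prod_cons, ih, MvPowerSeries.monomial_mul_monomial, Finset.sum_cons, one_mul]

lemma nm_key {n : ℕ} (D : Fin n → ℕ) (j : Fin n) :
    (D j + 1) * Nat.multinomial Finset.univ (fun l => D l + if l = j then 1 else 0)
    = (∑ l, D l + 1) * Nat.multinomial Finset.univ D := by
  have h1 := Nat.multinomial_spec Finset.univ (fun l => D l + if l = j then 1 else 0)
  have h2 := Nat.multinomial_spec Finset.univ D
  have h3 : ∏ l, Nat.factorial (D l + if l = j then 1 else 0) = (D j + 1) * ∏ l, Nat.factorial (D l) := by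
    rw [Fintype.prod_eq_mul_prod_compl j, Fintype.prod_eq_mul_prod_compl j (fun l => Nat.factorial (D l))]
    rw [if_pos rfl, Nat.factorial_succ]
    rw [Finset.prod_congr rfl (fun x hx => by
      rw [if_neg (by simpa [Finset.mem_compl] using hx), add_zero])]
    ring
  have h4 : (∑ l, (D l + if l = j then 1 else 0)) = (∑ l, D l) + 1 := by
    rw [Finset.sum_add_distrib]
    simp
  have hpos : 0 < ∏ l, Nat.factorial (D l) := Finset.prod_pos (fun _ _ => Nat.factorial_pos _)
  apply Nat.eq_of_mul_eq_mul_left hpos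
  calc (∏ l, Nat.factorial (D l)) * ((D j + 1) * Nat.multinomial Finset.univ
          (fun l => D l + if l = j then 1 else 0))
      = (∏ l, Nat.factorial (D l + if l = j then 1 else 0)) * Nat.multinomial Finset.univ
          (fun l => D l + if l = j then 1 else 0) := by rw [h3]; ring
    _ = Nat.factorial (∑ l, D l + 1) := by rw [h1, h4]
    _ = (∑ l, D l + 1) * Nat.factorial (∑ l, D l) := Nat.factorial_succ _
    _ = (∏ l, Nat.factorial (D l)) * ((∑ l, D l + 1) * Nat.multinomial Finset.univ D) := by rw [← h2]; ring

lemma exp_eq_iff (m : ℕ) (e : Fin (m+2) →₀ ℕ) (dF : Fin (m+1) → ℕ) :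
    (e = ∑ l : Fin (m+1), (Finsupp.single l.succ (dF l) + Finsupp.single 0 ((l:ℕ) * dF l)))
    ↔ (e 0 = ∑ l : Fin (m+1), (l:ℕ) * dF l ∧ ∀ l : Fin (m+1), e l.succ = dF l) := by
  have hz : ∀ x : Fin (m+1), ¬ ((0 : Fin (m+2)) = x.succ) := fun x hx => Fin.succ_ne_zero x hx.symm
  constructor
  · rintro rfl
    constructor
    · rw [Finsupp.finset_sum_apply]
      simp [Finsupp.single_apply, hz, Fin.succ_ne_zero]
    · intro l
      rw [Finsupp.finset_sum_apply]
      simp [Finsupp.single_apply, hz, Fin.succ_inj]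
  · rintro ⟨h0, hs⟩
    ext a
    induction a using Fin.cases with
    | zero =>
        rw [Finsupp.finset_sum_apply]
        simpa [Finsupp.single_apply, hz, Fin.succ_ne_zero] using h0
    | succ l =>
        rw [Finsupp.finset_sum_apply]
        simpa [Finsupp.single_apply, hz, Fin.succ_inj] using hs l

lemma coeff_gpow (m q : ℕ) (e : Fin (m+2) →₀ ℕ) :
    MvPowerSeries.coeff e
      ((∑ l : Fin (m+1), MvPowerSeries.X l.succ * MvPowerSeries.X 0 ^ (l:ℕ) :
        MvPowerSeries (Fin (m+2)) ℂ) ^ q) =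
    if e 0 = (∑ l : Fin (m+1), (l:ℕ) * e l.succ) ∧ (∑ l : Fin (m+1), e l.succ) = q
    then (Nat.multinomial Finset.univ (fun l : Fin (m+1) => e l.succ) : ℂ) else 0 := by
  classical
  rw [Finset.sum_pow_eq_sum_piAntidiag, map_sum]
  have hterm : ∀ dF : Fin (m+1) → ℕ,
      MvPowerSeries.coeff e ((Nat.multinomial Finset.univ dF : MvPowerSeries (Fin (m+2)) ℂ) *
        ∏ l : Fin (m+1), (MvPowerSeries.X l.succ * MvPowerSeries.X 0 ^ (l:ℕ)) ^ dF l) =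
      if (e 0 = ∑ l : Fin (m+1), (l:ℕ) * dF l ∧ (fun l : Fin (m+1) => e l.succ) = dF)
      then (Nat.multinomial Finset.univ dF : ℂ) else 0 := by
    intro dF
    have hprod : ∏ l : Fin (m+1), (MvPowerSeries.X l.succ * MvPowerSeries.X 0 ^ (l:ℕ)
          : MvPowerSeries (Fin (m+2)) ℂ) ^ dF l =
        MvPowerSeries.monomial
          (∑ l : Fin (m+1), (Finsupp.single l.succ (dF l) + Finsupp.single 0 ((l:ℕ) * dF l))) 1 := by
      rw [← prod_monomial_one]
      apply Finset.prod_congr rfl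
      intro l _
      rw [mul_pow, ← pow_mul, MvPowerSeries.X_pow_eq, MvPowerSeries.X_pow_eq,
        MvPowerSeries.monomial_mul_monomial, one_mul]
    rw [hprod, ← nsmul_eq_mul, map_nsmul, MvPowerSeries.coeff_monomial]
    have hfun : (∀ l : Fin (m+1), e l.succ = dF l) ↔ ((fun l : Fin (m+1) => e l.succ) = dF) :=
      ⟨fun h => funext h, fun h l => congrFun h l⟩
    simp only [exp_eq_iff, hfun]
    split_ifs with h
    · rw [← h.2]; simp
    · simp
  rw [Finset.sum_congr rfl (fun dF _ => hterm dF)]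
  have hcollapse : ∀ dF : Fin (m+1) → ℕ,
      (if (e 0 = ∑ l : Fin (m+1), (l:ℕ) * dF l ∧ (fun l : Fin (m+1) => e l.succ) = dF)
       then (Nat.multinomial Finset.univ dF : ℂ) else 0) =
      (if (fun l : Fin (m+1) => e l.succ) = dF then
        (if e 0 = ∑ l : Fin (m+1), (l:ℕ) * e l.succ then
          (Nat.multinomial Finset.univ (fun l : Fin (m+1) => e l.succ) : ℂ) else 0) else 0) := by
    intro dF
    by_cases h : (fun l : Fin (m+1) => e l.succ) = dF
    · subst h; simp
    · simp [h]
  rw [Finset.sum_congr rfl (fun dF _ => hcollapse dF), Finset.sum_ite_eq _ _ _]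
  simp only [Finset.mem_piAntidiag, Finset.mem_univ, implies_true, and_true, ne_eq]
  by_cases h1 : (∑ l : Fin (m+1), e l.succ) = q <;>
    by_cases h2 : e 0 = ∑ l : Fin (m+1), (l:ℕ) * e l.succ <;>
    simp [h1, h2]

lemma coeff_xpow_mul_gpow (m p q : ℕ) (e : Fin (m+2) →₀ ℕ) :
    MvPowerSeries.coeff e
      ((MvPowerSeries.X 0 : MvPowerSeries (Fin (m+2)) ℂ) ^ p *
        (∑ l : Fin (m+1), MvPowerSeries.X l.succ * MvPowerSeries.X 0 ^ (l:ℕ)) ^ q) =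
    if e 0 = p + (∑ l : Fin (m+1), (l:ℕ) * e l.succ) ∧ (∑ l : Fin (m+1), e l.succ) = q
    then (Nat.multinomial Finset.univ (fun l : Fin (m+1) => e l.succ) : ℂ) else 0 := by
  classical
  rw [MvPowerSeries.X_pow_eq, MvPowerSeries.coeff_monomial_mul]
  by_cases hle : Finsupp.single (0 : Fin (m+2)) p ≤ e
  · have hp : p ≤ e 0 := Finsupp.single_le_iff.mp hle
    rw [if_pos hle, one_mul, coeff_gpow]
    have h0 : (e - Finsupp.single (0 : Fin (m+2)) p) 0 = e 0 - p := by
      rw [Finsupp.tsub_apply, Finsupp.single_eq_same]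
    have hsucc : ∀ l : Fin (m+1), (e - Finsupp.single (0 : Fin (m+2)) p) l.succ = e l.succ := by
      intro l
      rw [Finsupp.tsub_apply, Finsupp.single_apply,
        if_neg (fun hx => Fin.succ_ne_zero l hx.symm), Nat.sub_zero]
    simp only [h0, hsucc]
    have hiff : (e 0 - p = ∑ l : Fin (m+1), (l:ℕ) * e l.succ) ↔
        (e 0 = p + ∑ l : Fin (m+1), (l:ℕ) * e l.succ) := by omega
    simp only [hiff]
  · rw [if_neg hle]
    rw [if_neg]
    rintro ⟨h1, -⟩
    exact hle (Finsupp.single_le_iff.mpr (by omega))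

lemma side (m : ℕ) (r : MvPowerSeries (Fin 2) ℂ) (i : ℕ) (jF : Fin (m+1))
    (d : Fin (m+1) →₀ ℕ) :
    MvPowerSeries.pderivCoeffwise jF (MvPowerSeries.xCoeff i (MvPowerSeries.subst2 (MvPowerSeries.X 0)
      (∑ l : Fin (m+1), MvPowerSeries.X l.succ * MvPowerSeries.X 0 ^ (l:ℕ)) r)) d
    = ∑ pq ∈ Finset.range (i + (∑ l : Fin (m+1), d l) + 2) ×ˢ
          Finset.range (i + (∑ l : Fin (m+1), d l) + 2),
        MvPowerSeries.coeff (Finsupp.single 0 pq.1 + Finsupp.single 1 pq.2) r *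
          (if i = pq.1 + ((∑ l : Fin (m+1), (l:ℕ) * d l) + (jF:ℕ)) ∧
              (∑ l : Fin (m+1), d l) + 1 = pq.2
           then ((((∑ l : Fin (m+1), d l) + 1) * Nat.multinomial Finset.univ ⇑d : ℕ) : ℂ)
           else 0) := by
  classical
  set E : Fin (m+2) →₀ ℕ :=
    Finsupp.single 0 i + Finsupp.mapDomain Fin.succ (d + Finsupp.single jF 1) with hE
  have hE0 : E 0 = i := by
    rw [hE, Finsupp.add_apply, Finsupp.single_eq_same, Finsupp.mapDomain_notin_range, add_zero]
    rintro ⟨x, hx⟩; exact Fin.succ_ne_zero x hx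
  have hEsucc : ∀ l : Fin (m+1), E l.succ = d l + if l = jF then 1 else 0 := by
    intro l
    rw [hE, Finsupp.add_apply, Finsupp.single_apply,
      if_neg (fun hx => Fin.succ_ne_zero l hx.symm),
      Finsupp.mapDomain_apply (Fin.succ_injective _), zero_add, Finsupp.add_apply,
      Finsupp.single_apply]
    by_cases hl : l = jF
    · subst hl; simp
    · simp [hl, Ne.symm hl]
  have hB : (∑ l : Fin (m+1), E l.succ) = (∑ l : Fin (m+1), d l) + 1 := by
    simp [hEsucc, Finset.sum_add_distrib, Finset.sum_ite_eq']
  have hA : (∑ l : Fin (m+1), (l:ℕ) * E l.succ)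
      = (∑ l : Fin (m+1), (l:ℕ) * d l) + (jF:ℕ) := by
    simp [hEsucc, mul_add, Finset.sum_add_distrib, mul_ite, mul_one, mul_zero,
      Finset.sum_ite_eq']
  have hEdeg : E.sum (fun _ n => n) + 1 = i + (∑ l : Fin (m+1), d l) + 2 := by
    rw [Finsupp.sum_fintype _ _ (fun _ => rfl), Fin.sum_univ_succ, hE0, hB]
    omega
  have hmulte : (fun l : Fin (m+1) => E l.succ) = fun l => d l + if l = jF then 1 else 0 :=
    funext hEsucc
  have lhs_eq : MvPowerSeries.pderivCoeffwise jF (MvPowerSeries.xCoeff i (MvPowerSeries.subst2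
      (MvPowerSeries.X 0)
      (∑ l : Fin (m+1), MvPowerSeries.X l.succ * MvPowerSeries.X 0 ^ (l:ℕ)) r)) d
    = ((d jF : ℂ) + 1) *
      ∑ pq ∈ Finset.range (E.sum (fun _ n => n) + 1) ×ˢ
          Finset.range (E.sum (fun _ n => n) + 1),
        MvPowerSeries.coeff (Finsupp.single 0 pq.1 + Finsupp.single 1 pq.2) r *
          MvPowerSeries.coeff E ((MvPowerSeries.X 0 : MvPowerSeries (Fin (m+2)) ℂ) ^ pq.1 *
            (∑ l : Fin (m+1), MvPowerSeries.X l.succ * MvPowerSeries.X 0 ^ (l:ℕ)) ^ pq.2) :=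
    rfl
  rw [lhs_eq, hEdeg, Finset.mul_sum]
  apply Finset.sum_congr rfl
  intro pq _
  rw [coeff_xpow_mul_gpow, mul_left_comm]
  congr 1
  rw [hE0, hA, hB, hmulte, mul_ite, mul_zero]
  apply if_congr Iff.rfl _ rfl
  rw [show ((d jF : ℂ) + 1) = ((d jF + 1 : ℕ) : ℂ) by push_cast; ring, ← Nat.cast_mul,
    nm_key ⇑d jF]

/-- Let `r ∈ ℂ[[X,Y]]`, `m ≥ 0`, and in `ℂ[[x, a₀, …, a_m]]` let
`h := r(x, ∑_{i=0}^m a_i x^i)`.  Writing `h = ∑ h_i x^i` with `h_i ∈ ℂ[[a₀, …, a_m]]`, for all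
`i, j, k` with `0 ≤ j ≤ m` and `0 ≤ k + j − i ≤ m` one has `∂h_i/∂a_j = ∂h_k/∂a_{k+j−i}`. -/
theorem pderiv_xCoeff_symm (m : ℕ) (r : MvPowerSeries (Fin 2) ℂ)
    (h : MvPowerSeries (Fin (m + 2)) ℂ)
    (hdef : h = MvPowerSeries.subst2 (MvPowerSeries.X 0)
      (∑ l : Fin (m + 1), MvPowerSeries.X l.succ * MvPowerSeries.X 0 ^ (l : ℕ)) r)
    (i j k : ℕ) (hj : j ≤ m) (hik : i ≤ k + j) (hkji : k + j - i ≤ m) :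
    MvPowerSeries.pderivCoeffwise (⟨j, by omega⟩ : Fin (m + 1)) (MvPowerSeries.xCoeff i h) =
      MvPowerSeries.pderivCoeffwise (⟨k + j - i, by omega⟩ : Fin (m + 1))
        (MvPowerSeries.xCoeff k h) := by
  classical
  subst hdef
  funext d
  rw [side m r i ⟨j, by omega⟩ d, side m r k ⟨k + j - i, by omega⟩ d]
  simp only [Fin.val_mk]
  set T := ∑ l : Fin (m+1), d l with hT
  set W := ∑ l : Fin (m+1), (l:ℕ) * d l with hW
  set v : ℂ := (((T + 1) * Nat.multinomial Finset.univ ⇑d : ℕ) : ℂ) with hv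
  have ext : ∀ (a jv N : ℕ), a + T + 2 ≤ N →
      (∑ pq ∈ Finset.range (a + T + 2) ×ˢ Finset.range (a + T + 2),
        MvPowerSeries.coeff (Finsupp.single 0 pq.1 + Finsupp.single 1 pq.2) r *
          (if a = pq.1 + (W + jv) ∧ T + 1 = pq.2 then v else 0))
      = ∑ pq ∈ Finset.range N ×ˢ Finset.range N,
        MvPowerSeries.coeff (Finsupp.single 0 pq.1 + Finsupp.single 1 pq.2) r *
          (if a = pq.1 + (W + jv) ∧ T + 1 = pq.2 then v else 0) := by
    intro a jv N hN
    apply Finset.sum_subset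
    · exact Finset.product_subset_product (Finset.range_subset_range.mpr (by omega))
        (Finset.range_subset_range.mpr (by omega))
    · intro pq _ hnot
      rw [if_neg, mul_zero]
      rintro ⟨h1, h2⟩
      apply hnot
      rw [Finset.mem_product, Finset.mem_range, Finset.mem_range]
      omega
  rw [ext i j (i + k + T + 2) (by omega), ext k (k + j - i) (i + k + T + 2) (by omega)]
  apply Finset.sum_congr rfl
  intro pq _
  congr 1
  apply if_congr _ rfl rfl
  constructor <;> intro ⟨h1, h2⟩ <;> exact ⟨by omega, h2⟩
end
end

section
/- Let m ≥ 0, let B ⊆ ℂ^{m+1} be an open ball centered at the origin, and let g_0, …, g_m : ℂ^{m+1} → ℂ be holomorphic on B and satisfy ∂g_i/∂a_j = ∂g_j/∂a_i on B for all 0 ≤ i, j ≤ m. Then there exists a function W : ℂ^{m+1} → ℂ holomorphic on B such that ∂W/∂a_i = g_i on B for all 0 ≤ i ≤ m. -/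
open Metric MeasureTheory Set intervalIntegral

namespace PoincareAux

variable {m : ℕ}

lemma single_eq_smul (j : Fin (m+1)) (c : ℂ) :
    (Pi.single j c : Fin (m+1) → ℂ) = c • (Pi.single j 1 : Fin (m+1) → ℂ) := by
  funext k
  by_cases h : k = j <;> simp [Pi.single_apply, h]

lemma update_eq_add_single (y : Fin (m+1) → ℂ) (j : Fin (m+1)) (z : ℂ) :
    Function.update y j z = y + Pi.single j (z - y j) := by
  funext k
  by_cases h : k = j
  · subst h; simp
  · simp [Function.update_of_ne h, Pi.single_eq_of_ne h]

lemma hasDerivAt_update (gi : (Fin (m+1) → ℂ) → ℂ) (y : Fin (m+1) → ℂ)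
    (j : Fin (m+1)) (z : ℂ) (hd : DifferentiableAt ℂ gi (Function.update y j z)) :
    HasDerivAt (fun w => gi (Function.update y j w))
      (fderiv ℂ gi (Function.update y j z) (Pi.single j 1)) z := by
  have hu : HasDerivAt (fun w : ℂ => Function.update y j w)
      ((Pi.single j 1 : Fin (m+1) → ℂ)) z := by
    have h1 : HasDerivAt (fun w : ℂ => y + (w - y j) • (Pi.single j 1 : Fin (m+1) → ℂ))
        ((1:ℂ) • (Pi.single j 1 : Fin (m+1) → ℂ)) z :=
      (((hasDerivAt_id z).sub_const (y j)).smul_const _).const_add y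
    have heq : (fun w : ℂ => Function.update y j w)
        = fun w : ℂ => y + (w - y j) • (Pi.single j 1 : Fin (m+1) → ℂ) := by
      funext w
      rw [update_eq_add_single, single_eq_smul]
    rw [heq]
    simpa using h1
  exact hd.hasFDerivAt.comp_hasDerivAt z hu

lemma opnorm_le_of_single (L : (Fin (m+1) → ℂ) →L[ℂ] ℂ) (c : ℝ) (hc : 0 ≤ c)
    (h : ∀ j, ‖L (Pi.single j 1)‖ ≤ c) : ‖L‖ ≤ (m+1 : ℝ) * c := by
  refine L.opNorm_le_bound (by positivity) fun v => ?_
  have hv : v = ∑ j, Pi.single j (v j) := by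
    funext k
    rw [Finset.sum_apply]
    simp [Fintype.sum_pi_single]
  calc ‖L v‖ = ‖∑ j, v j • L (Pi.single j 1)‖ := by
        conv_lhs => rw [hv]
        rw [map_sum]
        congr 1
        refine Finset.sum_congr rfl fun j _ => ?_
        rw [single_eq_smul, _root_.map_smul]
    _ ≤ ∑ j, ‖v j • L (Pi.single j 1)‖ := norm_sum_le _ _
    _ ≤ ∑ _j : Fin (m+1), ‖v‖ * c := by
        refine Finset.sum_le_sum fun j _ => ?_
        rw [norm_smul]
        exact mul_le_mul (norm_le_pi_norm v j) (h j) (norm_nonneg _) (norm_nonneg _)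
    _ = (m+1 : ℝ) * c * ‖v‖ := by
        rw [Finset.sum_const, Finset.card_univ, Fintype.card_fin]
        push_cast; ring

lemma fderiv_bound (m : ℕ) (ρ : ℝ) (hρ : 0 < ρ)
    (g : Fin (m+1) → (Fin (m+1) → ℂ) → ℂ)
    (hg : ∀ i, DifferentiableOn ℂ (g i) (ball (0 : Fin (m+1) → ℂ) ρ))
    (r : ℝ) (hr0 : 0 ≤ r) (hr : r < ρ) :
    ∃ C, 0 ≤ C ∧ (∀ i, ∀ y ∈ closedBall (0 : Fin (m+1) → ℂ) r, ‖g i y‖ ≤ C) ∧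
      (∀ i, ∀ y ∈ closedBall (0 : Fin (m+1) → ℂ) r, ‖fderiv ℂ (g i) y‖ ≤ C) := by
  set δ := (ρ - r)/2 with hδdef
  have hδ : 0 < δ := by unfold δ; linarith
  have hrδ : r + δ < ρ := by unfold δ; linarith
  set K := closedBall (0 : Fin (m+1) → ℂ) (r + δ) with hKdef
  have hKball : K ⊆ ball (0 : Fin (m+1) → ℂ) ρ := closedBall_subset_ball hrδ
  have hK : IsCompact K := isCompact_closedBall _ _
  have hcont : ContinuousOn (fun x => ∑ i, ‖g i x‖) K :=
    continuousOn_finset_sum _ fun i _ => ((hg i).continuousOn.mono hKball).norm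
  obtain ⟨M, hM⟩ := hK.exists_bound_of_continuousOn hcont
  have hval : ∀ i, ∀ x ∈ K, ‖g i x‖ ≤ M := by
    intro i x hx
    calc ‖g i x‖ ≤ ∑ i', ‖g i' x‖ :=
          Finset.single_le_sum (f := fun i' => ‖g i' x‖) (fun _ _ => norm_nonneg _)
            (Finset.mem_univ i)
      _ ≤ ‖∑ i', ‖g i' x‖‖ := le_abs_self _
      _ ≤ M := hM x hx
  have hM0 : 0 ≤ M := le_trans (norm_nonneg _) (hval 0 0 (by simp [hKdef]; positivity))
  have hsubK : closedBall (0 : Fin (m+1) → ℂ) r ⊆ K :=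
    closedBall_subset_closedBall (by linarith)
  have hder : ∀ i, ∀ y ∈ closedBall (0 : Fin (m+1) → ℂ) r,
      ‖fderiv ℂ (g i) y‖ ≤ (m+1 : ℝ) * (M / δ) := by
    intro i y hy
    have hynorm : ‖y‖ ≤ r := mem_closedBall_zero_iff.mp hy
    have hupd : ∀ (j : Fin (m+1)), ∀ z ∈ closedBall (y j) δ, Function.update y j z ∈ K := by
      intro j z hz
      rw [hKdef, mem_closedBall_zero_iff, pi_norm_le_iff_of_nonneg (by positivity)]
      intro k
      by_cases h : k = j
      · subst h
        rw [Function.update_self]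
        have h1 : ‖z - y k‖ ≤ δ := mem_closedBall_iff_norm.mp hz
        calc ‖z‖ ≤ ‖y k‖ + ‖z - y k‖ := by
              simpa using norm_add_le (y k) (z - y k)
          _ ≤ r + δ := add_le_add (le_trans (norm_le_pi_norm y k) hynorm) h1
      · rw [Function.update_of_ne h]
        exact le_trans (le_trans (norm_le_pi_norm y k) hynorm) (by linarith)
    refine opnorm_le_of_single _ _ (by positivity) fun j => ?_
    set f : ℂ → ℂ := fun z => g i (Function.update y j z) with hf
    have hdAt : ∀ z ∈ closedBall (y j) δ, DifferentiableAt ℂ (g i) (Function.update y j z) :=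
      fun z hz => (hg i).differentiableAt (isOpen_ball.mem_nhds (hKball (hupd j z hz)))
    have hfd : DifferentiableOn ℂ f (closedBall (y j) δ) := fun z hz =>
      (hasDerivAt_update (g i) y j z (hdAt z hz)).differentiableAt.differentiableWithinAt
    have hdc : DiffContOnCl ℂ f (ball (y j) δ) :=
      DifferentiableOn.diffContOnCl (by rwa [closure_ball _ hδ.ne'])
    have hsphere : ∀ z ∈ sphere (y j) δ, ‖f z‖ ≤ M := fun z hz =>
      hval i _ (hupd j z (sphere_subset_closedBall hz))
    have hcauchy : ‖deriv f (y j)‖ ≤ M / δ :=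
      Complex.norm_deriv_le_of_forall_mem_sphere_norm_le hδ hdc hsphere
    have hj : deriv f (y j) = fderiv ℂ (g i) y (Pi.single j 1) := by
      have h0 : Function.update y j (y j) = y := Function.update_eq_self j y
      have h := hasDerivAt_update (g i) y j (y j)
        (by rw [h0]; exact (hg i).differentiableAt (isOpen_ball.mem_nhds (hKball (hsubK hy))))
      rw [h0] at h
      exact h.deriv
    rw [← hj]
    exact hcauchy
  refine ⟨max M ((m+1 : ℝ) * (M / δ)), le_max_of_le_left hM0, ?_, ?_⟩
  · exact fun i y hy => le_trans (hval i y (hsubK hy)) (le_max_left _ _)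
  · exact fun i y hy => le_trans (hder i y hy) (le_max_right _ _)

lemma eq_sum_single (v : Fin (m+1) → ℂ) : (∑ i, (v i) • (Pi.single i 1 : Fin (m+1) → ℂ)) = v := by
  funext k
  rw [Finset.sum_apply, Finset.sum_congr rfl (fun i _ => by rw [← single_eq_smul])]
  exact Fintype.sum_pi_single k v

end PoincareAux

set_option maxHeartbeats 1000000 in
/-- holomorphic Poincaré lemma on a ball.  Let `m ≥ 0`, let `B ⊆ ℂ^{m+1}` be
an open ball centered at the origin, and let `g_0, …, g_m : ℂ^{m+1} → ℂ` be holomorphic on `B`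
with `∂g_i/∂a_j = ∂g_j/∂a_i` on `B` for all `i, j`.  Then there is a holomorphic function
`W` on `B` with `∂W/∂a_i = g_i` on `B` for all `i`. -/
theorem exists_potential_of_symm_fderiv (m : ℕ) (ρ : ℝ) (hρ : 0 < ρ)
    (g : Fin (m + 1) → (Fin (m + 1) → ℂ) → ℂ)
    (hg : ∀ i, DifferentiableOn ℂ (g i) (Metric.ball (0 : Fin (m + 1) → ℂ) ρ))
    (hsym : ∀ i j, ∀ a ∈ Metric.ball (0 : Fin (m + 1) → ℂ) ρ,
      fderiv ℂ (g i) a (Pi.single j 1) = fderiv ℂ (g j) a (Pi.single i 1)) :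
    ∃ W : (Fin (m + 1) → ℂ) → ℂ,
      DifferentiableOn ℂ W (Metric.ball (0 : Fin (m + 1) → ℂ) ρ) ∧
        ∀ i, ∀ a ∈ Metric.ball (0 : Fin (m + 1) → ℂ) ρ,
          fderiv ℂ W a (Pi.single i 1) = g i a := by
  classical
  set W : (Fin (m+1) → ℂ) → ℂ :=
    fun x => ∫ t in (0:ℝ)..1, ∑ i, x i * g i ((t:ℂ) • x) with hWdef
  suffices key : ∀ a ∈ Metric.ball (0 : Fin (m+1) → ℂ) ρ,
      ∃ La : (Fin (m+1) → ℂ) →L[ℂ] ℂ,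
        HasFDerivAt W La a ∧ ∀ j, La (Pi.single j 1) = g j a by
    refine ⟨W, fun a ha => ?_, fun j a ha => ?_⟩
    · obtain ⟨La, hLa, -⟩ := key a ha
      exact hLa.differentiableAt.differentiableWithinAt
    · obtain ⟨La, hLa, hLj⟩ := key a ha
      rw [hLa.fderiv]; exact hLj j
  intro a ha
  have hanorm : ‖a‖ < ρ := mem_ball_zero_iff.mp ha
  set ε : ℝ := (ρ - ‖a‖)/2 with hεdef
  have hε0 : 0 < ε := by unfold ε; linarith
  set r : ℝ := ‖a‖ + ε with hrdef
  have hrρ : r < ρ := by unfold r ε; linarith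
  have hr0 : 0 ≤ r := by positivity
  obtain ⟨C, hC0, hCval, hCder⟩ := PoincareAux.fderiv_bound m ρ hρ g hg r hr0 hrρ
  have hxr : ∀ x ∈ Metric.ball a ε, ‖x‖ ≤ r := by
    intro x hx
    have h1 : ‖x - a‖ < ε := by rwa [Metric.mem_ball, dist_eq_norm] at hx
    have h2 : ‖x‖ ≤ ‖a‖ + ‖x - a‖ := by simpa using norm_add_le a (x - a)
    unfold r; linarith
  have hmem : ∀ x ∈ Metric.ball a ε, ∀ t ∈ Set.Icc (0:ℝ) 1,
      ((t:ℂ) • x) ∈ Metric.closedBall (0 : Fin (m+1) → ℂ) r := by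
    intro x hx t ht
    rw [mem_closedBall_zero_iff, norm_smul]
    have htn : ‖(t:ℂ)‖ ≤ 1 := by
      rw [Complex.norm_real, Real.norm_eq_abs, abs_of_nonneg ht.1]; exact ht.2
    calc ‖(t:ℂ)‖ * ‖x‖ ≤ 1 * r := mul_le_mul htn (hxr x hx) (norm_nonneg _) one_pos.le
      _ = r := one_mul r
  have hmemB : ∀ x ∈ Metric.ball a ε, ∀ t ∈ Set.Icc (0:ℝ) 1,
      ((t:ℂ) • x) ∈ Metric.ball (0 : Fin (m+1) → ℂ) ρ :=
    fun x hx t ht => Metric.closedBall_subset_ball hrρ (hmem x hx t ht)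
  have haself : a ∈ Metric.ball a ε := Metric.mem_ball_self hε0
  set F' : (Fin (m+1) → ℂ) → ℝ → (Fin (m+1) → ℂ) →L[ℂ] ℂ := fun x t =>
    ∑ i, ((x i) • ((t:ℂ) • fderiv ℂ (g i) ((t:ℂ) • x))
      + (g i ((t:ℂ) • x)) • (ContinuousLinearMap.proj i :
          ((Fin (m+1) → ℂ)) →L[ℂ] ℂ)) with hF'def
  have hIsub : Set.uIoc (0:ℝ) 1 ⊆ Set.Icc (0:ℝ) 1 := by
    rw [Set.uIoc_of_le zero_le_one]; exact Set.Ioc_subset_Icc_self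
  have hFcont : ∀ x ∈ Metric.ball a ε,
      ContinuousOn (fun t : ℝ => ∑ i, x i * g i ((t:ℂ) • x)) (Set.Icc (0:ℝ) 1) := by
    intro x hx
    refine continuousOn_finset_sum _ fun i _ => continuousOn_const.mul ?_
    exact ((hg i).continuousOn).comp
      (Complex.continuous_ofReal.smul continuous_const).continuousOn
      (fun t ht => hmemB x hx t ht)
  have hF_meas : ∀ᶠ x in nhds a, AEStronglyMeasurable
      (fun t : ℝ => ∑ i, x i * g i ((t:ℂ) • x)) (volume.restrict (Set.uIoc (0:ℝ) 1)) := by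
    filter_upwards [Metric.isOpen_ball.mem_nhds haself] with x hx
    exact ((hFcont x hx).mono hIsub).aestronglyMeasurable measurableSet_uIoc
  have hF_int : IntervalIntegrable (fun t : ℝ => ∑ i, a i * g i ((t:ℂ) • a)) volume 0 1 := by
    apply ContinuousOn.intervalIntegrable
    rw [Set.uIcc_of_le zero_le_one]
    exact hFcont a haself
  have hF'_meas : AEStronglyMeasurable (F' a) (volume.restrict (Set.uIoc (0:ℝ) 1)) := by
    rw [hF'def]
    refine Finset.aestronglyMeasurable_fun_sum _ fun i _ => AEStronglyMeasurable.add ?_ ?_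
    · have hm1 : AEStronglyMeasurable (fun t : ℝ => fderiv ℂ (g i) ((t:ℂ) • a))
          (volume.restrict (Set.uIoc (0:ℝ) 1)) :=
        ((measurable_fderiv ℂ (g i)).comp
          (Complex.continuous_ofReal.smul (continuous_const (y := a))).measurable).aestronglyMeasurable
      have hm2 : AEStronglyMeasurable (fun t : ℝ => (t:ℂ) • fderiv ℂ (g i) ((t:ℂ) • a))
          (volume.restrict (Set.uIoc (0:ℝ) 1)) :=
        AEStronglyMeasurable.smul Complex.continuous_ofReal.aestronglyMeasurable hm1
      exact hm2.const_smul (a i)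
    · refine AEStronglyMeasurable.fun_smul ?_ aestronglyMeasurable_const
      refine (ContinuousOn.mono ?_ hIsub).aestronglyMeasurable measurableSet_uIoc
      exact ((hg i).continuousOn).comp
        (Complex.continuous_ofReal.smul continuous_const).continuousOn
        (fun t ht => hmemB a haself t ht)
  have hproj_norm : ∀ i : Fin (m+1), ‖(ContinuousLinearMap.proj i :
      ((Fin (m+1) → ℂ)) →L[ℂ] ℂ)‖ ≤ 1 := by
    intro i
    refine ContinuousLinearMap.opNorm_le_bound _ zero_le_one fun v => ?_
    rw [one_mul]
    exact norm_le_pi_norm v i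
  have h_bound : ∀ t, t ∈ Set.uIoc (0:ℝ) 1 → ∀ x ∈ Metric.ball a ε,
      ‖F' x t‖ ≤ (m+1 : ℝ) * (r * C + C) := by
    intro t ht x hx
    have htI := hIsub ht
    have htn : ‖(t:ℂ)‖ ≤ 1 := by
      rw [Complex.norm_real, Real.norm_eq_abs, abs_of_nonneg htI.1]; exact htI.2
    rw [hF'def]
    refine le_trans (norm_sum_le _ _) ?_
    have hterm : ∀ i : Fin (m+1), ‖(x i) • ((t:ℂ) • fderiv ℂ (g i) ((t:ℂ) • x))
        + (g i ((t:ℂ) • x)) • (ContinuousLinearMap.proj i :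
          ((Fin (m+1) → ℂ)) →L[ℂ] ℂ)‖ ≤ r * C + C := by
      intro i
      refine le_trans (norm_add_le _ _) (add_le_add ?_ ?_)
      · rw [norm_smul, norm_smul]
        calc ‖x i‖ * (‖(t:ℂ)‖ * ‖fderiv ℂ (g i) ((t:ℂ) • x)‖) ≤ r * (1 * C) := by
              refine mul_le_mul (le_trans (norm_le_pi_norm x i) (hxr x hx)) ?_ (by positivity) hr0
              exact mul_le_mul htn (hCder i _ (hmem x hx t htI)) (norm_nonneg _) one_pos.le
          _ = r * C := by ring
      · rw [norm_smul]
        calc ‖g i ((t:ℂ) • x)‖ * ‖(ContinuousLinearMap.proj i :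
              ((Fin (m+1) → ℂ)) →L[ℂ] ℂ)‖ ≤ C * 1 :=
              mul_le_mul (hCval i _ (hmem x hx t htI)) (hproj_norm i) (norm_nonneg _) hC0
          _ = C := mul_one C
    refine le_trans (Finset.sum_le_sum fun i _ => hterm i) (le_of_eq ?_)
    rw [Finset.sum_const, Finset.card_univ, Fintype.card_fin, nsmul_eq_mul]
    push_cast; ring
  have h_diff : ∀ t, t ∈ Set.uIoc (0:ℝ) 1 → ∀ x ∈ Metric.ball a ε,
      HasFDerivAt (fun x => ∑ i, x i * g i ((t:ℂ) • x)) (F' x t) x := by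
    intro t ht x hx
    have htI := hIsub ht
    rw [hF'def]
    refine HasFDerivAt.fun_sum fun i _ => ?_
    have hlin : HasFDerivAt (fun x : Fin (m+1) → ℂ => (t:ℂ) • x)
        ((t:ℂ) • ContinuousLinearMap.id ℂ (Fin (m+1) → ℂ)) x := by
      simpa using ((t:ℂ) • ContinuousLinearMap.id ℂ (Fin (m+1) → ℂ)).hasFDerivAt
    have hgd : DifferentiableAt ℂ (g i) ((t:ℂ) • x) :=
      (hg i).differentiableAt (Metric.isOpen_ball.mem_nhds (hmemB x hx t htI))
    have hcomp : HasFDerivAt (fun x : Fin (m+1) → ℂ => g i ((t:ℂ) • x))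
        ((t:ℂ) • fderiv ℂ (g i) ((t:ℂ) • x)) x := by
      have h := hgd.hasFDerivAt.comp x hlin
      refine h.congr_fderiv ?_
      ext v
      simp
    have hproj : HasFDerivAt (fun x : Fin (m+1) → ℂ => x i)
        (ContinuousLinearMap.proj i : (Fin (m+1) → ℂ) →L[ℂ] ℂ) x :=
      (ContinuousLinearMap.proj i : (Fin (m+1) → ℂ) →L[ℂ] ℂ).hasFDerivAt
    exact hproj.mul hcomp
  have hmain := intervalIntegral.hasFDerivAt_integral_of_dominated_of_fderiv_le
    (𝕜 := ℂ) (μ := volume) (F := fun x t => ∑ i, x i * g i ((t:ℂ) • x)) (F' := F')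
    (bound := fun _ => (m+1 : ℝ) * (r * C + C)) (Metric.ball_mem_nhds a hε0) hF_meas hF_int hF'_meas
    (Filter.Eventually.of_forall h_bound) intervalIntegrable_const
    (Filter.Eventually.of_forall h_diff)
  have hint : IntervalIntegrable (F' a) volume 0 1 := by
    rw [intervalIntegrable_iff]
    refine MeasureTheory.Integrable.mono'
      (g := fun _ : ℝ => (m+1 : ℝ) * (r * C + C)) ?_ hF'_meas ?_
    · rw [Set.uIoc_of_le zero_le_one]
      exact (integrableOn_const_iff).2 (Or.inr measure_Ioc_lt_top)
    · exact (ae_restrict_iff' measurableSet_uIoc).2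
        (Filter.Eventually.of_forall fun t ht => h_bound t ht a haself)
  refine ⟨∫ t in (0:ℝ)..1, F' a t, hmain, fun j => ?_⟩
  rw [ContinuousLinearMap.intervalIntegral_apply hint (Pi.single j 1)]
  have hint2 : IntervalIntegrable (fun t => F' a t (Pi.single j 1)) volume 0 1 := by
    rw [intervalIntegrable_iff]
    refine MeasureTheory.Integrable.mono'
      (g := fun _ : ℝ => ((m+1 : ℝ) * (r * C + C)) * ‖(Pi.single j 1 : Fin (m+1) → ℂ)‖) ?_
      (hF'_meas.apply_continuousLinearMap (Pi.single j 1)) ?_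
    · rw [Set.uIoc_of_le zero_le_one]
      exact (integrableOn_const_iff).2 (Or.inr measure_Ioc_lt_top)
    · refine (ae_restrict_iff' measurableSet_uIoc).2
        (Filter.Eventually.of_forall fun t ht => ?_)
      exact le_trans ((F' a t).le_opNorm _)
        (mul_le_mul_of_nonneg_right (h_bound t ht a haself) (norm_nonneg _))
  have hderivφ : ∀ t ∈ Set.uIcc (0:ℝ) 1,
      HasDerivAt (fun s : ℝ => (s:ℂ) * g j ((s:ℂ) • a)) (F' a t (Pi.single j 1)) t := by
    intro t ht
    have htI : t ∈ Set.Icc (0:ℝ) 1 := by rwa [Set.uIcc_of_le zero_le_one] at ht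
    have hta : ((t:ℂ) • a) ∈ Metric.ball (0 : Fin (m+1) → ℂ) ρ := hmemB a haself t htI
    have hgd : DifferentiableAt ℂ (g j) ((t:ℂ) • a) :=
      (hg j).differentiableAt (Metric.isOpen_ball.mem_nhds hta)
    have hz : HasDerivAt (fun z : ℂ => g j (z • a)) (fderiv ℂ (g j) ((t:ℂ) • a) a) (t:ℂ) := by
      have hsm : HasDerivAt (fun z : ℂ => z • a) a (t:ℂ) := by
        simpa using (hasDerivAt_id ((t:ℂ))).smul_const a
      exact hgd.hasFDerivAt.comp_hasDerivAt _ hsm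
    have h1 : HasDerivAt (fun s : ℝ => g j ((s:ℂ) • a)) (fderiv ℂ (g j) ((t:ℂ) • a) a) t :=
      hz.comp_ofReal
    have h2 : HasDerivAt (fun s : ℝ => (s:ℂ)) 1 t := by
      simpa using (hasDerivAt_id t).ofReal_comp
    have hφ : HasDerivAt (fun s : ℝ => (s:ℂ) * g j ((s:ℂ) • a))
        ((1:ℂ) * g j ((t:ℂ) • a) + (t:ℂ) * fderiv ℂ (g j) ((t:ℂ) • a) a) t := h2.mul h1
    have heval : F' a t (Pi.single j 1)
        = (t:ℂ) * fderiv ℂ (g j) ((t:ℂ) • a) a + g j ((t:ℂ) • a) := by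
      rw [hF'def, ContinuousLinearMap.sum_apply]
      have hterm : ∀ i : Fin (m+1),
          ((a i) • ((t:ℂ) • fderiv ℂ (g i) ((t:ℂ) • a))
            + (g i ((t:ℂ) • a)) • (ContinuousLinearMap.proj i :
              ((Fin (m+1) → ℂ)) →L[ℂ] ℂ)) (Pi.single j 1)
          = a i * ((t:ℂ) * fderiv ℂ (g i) ((t:ℂ) • a) (Pi.single j 1))
            + g i ((t:ℂ) • a) * ((Pi.single j (1:ℂ) : Fin (m+1) → ℂ) i) := by
        intro i
        rw [ContinuousLinearMap.add_apply, ContinuousLinearMap.smul_apply,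
          ContinuousLinearMap.smul_apply, ContinuousLinearMap.smul_apply,
          ContinuousLinearMap.proj_apply, smul_eq_mul, smul_eq_mul, smul_eq_mul]
      rw [Finset.sum_congr rfl fun i _ => hterm i, Finset.sum_add_distrib]
      have hsum1 : ∑ i, g i ((t:ℂ) • a) * ((Pi.single j (1:ℂ) : Fin (m+1) → ℂ) i) = g j ((t:ℂ) • a) := by
        rw [Finset.sum_eq_single j]
        · simp
        · intro b _ hb; rw [Pi.single_eq_of_ne hb, mul_zero]
        · simp
      have hsum2 : ∑ i, a i * ((t:ℂ) * fderiv ℂ (g i) ((t:ℂ) • a) (Pi.single j 1))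
          = (t:ℂ) * fderiv ℂ (g j) ((t:ℂ) • a) a := by
        have hswap : ∀ i : Fin (m+1),
            a i * ((t:ℂ) * fderiv ℂ (g i) ((t:ℂ) • a) (Pi.single j 1))
            = (t:ℂ) * (a i * fderiv ℂ (g j) ((t:ℂ) • a) (Pi.single i 1)) := by
          intro i; rw [hsym i j _ hta]; ring
        rw [Finset.sum_congr rfl fun i _ => hswap i, ← Finset.mul_sum]
        congr 1
        calc ∑ i, a i * fderiv ℂ (g j) ((t:ℂ) • a) (Pi.single i 1)
            = fderiv ℂ (g j) ((t:ℂ) • a) (∑ i, (a i) • (Pi.single i 1 : Fin (m+1) → ℂ)) := by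
              rw [map_sum]
              exact Finset.sum_congr rfl fun i _ => by rw [_root_.map_smul, smul_eq_mul]
          _ = fderiv ℂ (g j) ((t:ℂ) • a) a := by rw [PoincareAux.eq_sum_single]
      rw [hsum1, hsum2]
    rw [heval]
    convert hφ using 1
    ring
  have hFTC : (∫ t in (0:ℝ)..1, F' a t (Pi.single j 1))
      = (fun s : ℝ => (s:ℂ) * g j ((s:ℂ) • a)) 1 - (fun s : ℝ => (s:ℂ) * g j ((s:ℂ) • a)) 0 :=
    intervalIntegral.integral_eq_sub_of_hasDerivAt hderivφ hint2
  rw [hFTC]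
  simp
end

section
/- Let n ≥ 2 and m = n − 2. Let f ∈ ℂ[[X,Y]] be a formal power series in two variables. In the ring ℂ[[x, a_0, …, a_m]], let g := f(x, Σ_{i=0}^m a_i x^i) (substitution is well-defined since x and each monomial a_i x^i have zero constant term), write g = Σ_{i=0}^∞ f_i x^i with f_i ∈ ℂ[[a_0, …, a_m]], and set k_i := −f_i. Then the integrability condition ∂k_{n−1−i}/∂a_j = ∂k_{n−1−j}/∂a_i holds in ℂ[[a_0, …, a_m]] for all 0 ≤ i, j ≤ m. -/
noncomputable section

namespace PDerivAux

/-- Coefficient formula for `MvPolynomial.pderiv`. -/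
lemma coeff_pderiv {σ : Type*} [DecidableEq σ] (v : σ) (P : MvPolynomial σ ℂ) (e : σ →₀ ℕ) :
    MvPolynomial.coeff e (MvPolynomial.pderiv v P)
      = ((e v : ℂ) + 1) * MvPolynomial.coeff (e + Finsupp.single v 1) P := by
  induction P using MvPolynomial.induction_on' with
  | add P Q hP hQ =>
    rw [map_add, MvPolynomial.coeff_add, MvPolynomial.coeff_add, hP, hQ]; ring
  | monomial s a =>
    rw [MvPolynomial.pderiv_monomial, MvPolynomial.coeff_monomial, MvPolynomial.coeff_monomial]
    by_cases h0 : s v = 0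
    · rw [h0]
      have h1 : ¬ s = e + Finsupp.single v 1 := by
        intro h; apply absurd h0
        rw [h]; simp
      rw [if_neg h1]
      simp
    · by_cases h : s = e + Finsupp.single v 1
      · subst h
        have h1 : e + Finsupp.single v 1 - Finsupp.single v 1 = e := by simp
        rw [if_pos h1, if_pos rfl, Finsupp.add_apply, Finsupp.single_apply, if_pos rfl]
        push_cast
        ring
      · rw [if_neg h, if_neg]
        · simp
        · intro h1
          apply h
          ext w
          have h2 := DFunLike.congr_fun h1 w
          simp only [Finsupp.tsub_apply, Finsupp.single_apply] at h2
          simp only [Finsupp.add_apply, Finsupp.single_apply]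
          by_cases hw : v = w
          · subst hw; rw [if_pos rfl] at h2 ⊢; omega
          · rw [if_neg hw] at h2 ⊢; omega

/-- Shift formula: coefficient of `X i ^ b * P`. -/
lemma coeff_X_pow_mul {σ : Type*} [DecidableEq σ] (i : σ) (b : ℕ) (P : MvPolynomial σ ℂ)
    (e : σ →₀ ℕ) :
    MvPolynomial.coeff e (MvPolynomial.X i ^ b * P)
      = if Finsupp.single i b ≤ e then
          MvPolynomial.coeff (e - Finsupp.single i b) P else 0 := by
  rw [MvPolynomial.coeff_mul]
  split_ifs with h
  · rw [Finset.sum_eq_single (Finsupp.single i b, e - Finsupp.single i b)]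
    · rw [MvPolynomial.coeff_X_pow, if_pos rfl, one_mul]
    · rintro ⟨u, v⟩ hm hne
      rw [Finset.HasAntidiagonal.mem_antidiagonal] at hm
      rw [MvPolynomial.coeff_X_pow]
      by_cases hu : u = Finsupp.single i b
      · exfalso; apply hne; subst hu
        have : v = e - Finsupp.single i b := by
          rw [← hm]; simp
        rw [this]
      · rw [if_neg (fun hx => hu hx.symm), zero_mul]
    · intro hmem
      exfalso; apply hmem
      rw [Finset.HasAntidiagonal.mem_antidiagonal]
      exact add_tsub_cancel_of_le h
  · apply Finset.sum_eq_zero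
    rintro ⟨u, v⟩ hm
    rw [Finset.HasAntidiagonal.mem_antidiagonal] at hm
    rw [MvPolynomial.coeff_X_pow]
    by_cases hu : u = Finsupp.single i b
    · exfalso; apply h; subst hu
      exact le_iff_exists_add.mpr ⟨v, hm.symm⟩
    · rw [if_neg (fun hx => hu hx.symm), zero_mul]

/-- Low-degree coefficients of a power of a series with zero constant term vanish. -/
lemma coeff_pow_eq_zero {σ : Type*} [DecidableEq σ] {h : MvPowerSeries σ ℂ}
    (hh : MvPowerSeries.constantCoeff h = 0) :
    ∀ (q : ℕ) (e : σ →₀ ℕ), e.sum (fun _ n => n) < q → MvPowerSeries.coeff e (h ^ q) = 0 := by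
  intro q
  induction q with
  | zero => intro e he; omega
  | succ q ih =>
    intro e he
    rw [pow_succ', MvPowerSeries.coeff_mul]
    apply Finset.sum_eq_zero
    rintro ⟨u, v⟩ hm
    rw [Finset.HasAntidiagonal.mem_antidiagonal] at hm
    have hsum : u.sum (fun _ n => n) + v.sum (fun _ n => n) = e.sum (fun _ n => n) := by
      rw [← hm, Finsupp.sum_add_index' (fun _ => rfl) (fun _ _ _ => rfl)]
    by_cases hu : u = 0
    · subst hu
      rw [MvPowerSeries.coeff_zero_eq_constantCoeff_apply, hh, zero_mul]
    · have h1 : u.sum (fun _ n => n) ≠ 0 := by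
        intro h0
        apply hu
        rw [Finsupp.sum] at h0
        have hz := Finset.sum_eq_zero_iff.mp h0
        ext w
        by_cases hw : w ∈ u.support
        · simpa using hz w hw
        · simpa [Finsupp.notMem_support_iff] using hw
      rw [ih v (by omega), mul_zero]

/-- Low-degree coefficients of `h₁ ^ p * h₂ ^ q` vanish when both have zero constant term. -/
lemma coeff_mul_pow_eq_zero {σ : Type*} [DecidableEq σ] {h₁ h₂ : MvPowerSeries σ ℂ}
    (hh₁ : MvPowerSeries.constantCoeff h₁ = 0)
    (hh₂ : MvPowerSeries.constantCoeff h₂ = 0) (p q : ℕ) (e : σ →₀ ℕ)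
    (he : e.sum (fun _ n => n) < p + q) :
    MvPowerSeries.coeff e (h₁ ^ p * h₂ ^ q) = 0 := by
  rw [MvPowerSeries.coeff_mul]
  apply Finset.sum_eq_zero
  rintro ⟨u, v⟩ hm
  rw [Finset.HasAntidiagonal.mem_antidiagonal] at hm
  have hsum : u.sum (fun _ n => n) + v.sum (fun _ n => n) = e.sum (fun _ n => n) := by
    rw [← hm, Finsupp.sum_add_index' (fun _ => rfl) (fun _ _ _ => rfl)]
  by_cases hp : u.sum (fun _ n => n) < p
  · rw [coeff_pow_eq_zero hh₁ p u hp, zero_mul]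
  · rw [coeff_pow_eq_zero hh₂ q v (by omega), mul_zero]

end PDerivAux


/-- The formal partial derivative of a multivariate formal power series with respect to the
variable `j`, defined coefficientwise. -/
def MvPowerSeries.cpderiv {σ : Type*} (j : σ) (f : MvPowerSeries σ ℂ) :
    MvPowerSeries σ ℂ :=
  fun e => ((e j : ℂ) + 1) * MvPowerSeries.coeff (e + Finsupp.single j 1) f

open PDerivAux in
/-- Let `n ≥ 2`, `m = n − 2`, `f ∈ ℂ[[X,Y]]`.  In `ℂ[[x, a₀, …, a_m]]` let
`g := f(x, ∑_{i=0}^m a_i x^i)`, write `g = ∑ f_i x^i` with `f_i ∈ ℂ[[a₀, …, a_m]]`, and set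
`k_i := −f_i`.  Then `∂k_{n−1−i}/∂a_j = ∂k_{n−1−j}/∂a_i` for all `0 ≤ i, j ≤ m`. -/
theorem pderiv_k_symm (n m : ℕ) (hn : 2 ≤ n) (hm : m = n - 2)
    (f : MvPowerSeries (Fin 2) ℂ)
    (g : MvPowerSeries (Fin (m + 2)) ℂ)
    (hg : g = MvPowerSeries.subst2 (MvPowerSeries.X 0)
      (∑ l : Fin (m + 1), MvPowerSeries.X l.succ * MvPowerSeries.X 0 ^ (l : ℕ)) f)
    (k : ℕ → MvPowerSeries (Fin (m + 1)) ℂ)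
    (hk : ∀ i, k i = -(MvPowerSeries.xCoeff i g))
    (i j : ℕ) (hi : i ≤ m) (hj : j ≤ m) :
    MvPowerSeries.cpderiv (⟨j, by omega⟩ : Fin (m + 1)) (k (n - 1 - i)) =
      MvPowerSeries.cpderiv (⟨i, by omega⟩ : Fin (m + 1)) (k (n - 1 - j)) := by
  classical
  subst hg
  set SS : MvPowerSeries (Fin (m + 2)) ℂ :=
    ∑ l : Fin (m + 1), MvPowerSeries.X l.succ * MvPowerSeries.X 0 ^ (l : ℕ) with hSS
  set S : MvPolynomial (Fin (m + 2)) ℂ :=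
    ∑ l : Fin (m + 1), MvPolynomial.X l.succ * MvPolynomial.X 0 ^ (l : ℕ) with hS
  have hScoe : (↑S : MvPowerSeries (Fin (m + 2)) ℂ) = SS := by
    rw [hS, hSS, ← MvPolynomial.coeToMvPowerSeries.ringHom_apply, map_sum]
    refine Finset.sum_congr rfl fun l _ => ?_
    rw [map_mul, map_pow, MvPolynomial.coeToMvPowerSeries.ringHom_apply,
      MvPolynomial.coeToMvPowerSeries.ringHom_apply, MvPolynomial.coe_X, MvPolynomial.coe_X]
  have hcoe : ∀ p q : ℕ, (MvPowerSeries.X (0 : Fin (m + 2))) ^ p * SS ^ q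
      = ((MvPolynomial.X 0 ^ p * S ^ q : MvPolynomial (Fin (m + 2)) ℂ) :
          MvPowerSeries (Fin (m + 2)) ℂ) := by
    intro p q
    rw [MvPolynomial.coe_mul, MvPolynomial.coe_pow, MvPolynomial.coe_pow, MvPolynomial.coe_X,
      hScoe]
  have hSSc : MvPowerSeries.constantCoeff SS = 0 := by
    rw [hSS, map_sum]
    refine Finset.sum_eq_zero fun l _ => ?_
    rw [map_mul, MvPowerSeries.constantCoeff_X, zero_mul]
  -- derivative of S
  have hpdS : ∀ (b : Fin (m + 1)),
      MvPolynomial.pderiv b.succ S = MvPolynomial.X 0 ^ (b : ℕ) := by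
    intro b
    rw [hS, map_sum, Finset.sum_eq_single b]
    · rw [MvPolynomial.pderiv_mul, MvPolynomial.pderiv_X_self, one_mul,
        MvPolynomial.pderiv_pow,
        MvPolynomial.pderiv_X_of_ne (Fin.succ_ne_zero b).symm, mul_zero, mul_zero, add_zero]
    · intro l _ hl
      rw [MvPolynomial.pderiv_mul,
        MvPolynomial.pderiv_X_of_ne (fun h => hl (Fin.succ_injective _ h)), zero_mul,
        MvPolynomial.pderiv_pow,
        MvPolynomial.pderiv_X_of_ne (Fin.succ_ne_zero b).symm, mul_zero, mul_zero, add_zero]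
    · intro h; exact absurd (Finset.mem_univ b) h
  have hstep : ∀ (p q : ℕ) (b : Fin (m + 1)) (e : Fin (m + 2) →₀ ℕ),
      MvPolynomial.coeff e (MvPolynomial.pderiv b.succ
        (MvPolynomial.X 0 ^ p * S ^ q))
        = (q : ℂ) * MvPolynomial.coeff e
            (MvPolynomial.X 0 ^ (p + (b : ℕ)) * S ^ (q - 1)) := by
    intro p q b e
    have h1 : MvPolynomial.pderiv b.succ ((MvPolynomial.X 0 : MvPolynomial (Fin (m+2)) ℂ) ^ p)
        = 0 := by
      rw [MvPolynomial.pderiv_pow, MvPolynomial.pderiv_X_of_ne (Fin.succ_ne_zero b).symm,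
        mul_zero]
    rw [MvPolynomial.pderiv_mul, h1, zero_mul, zero_add, MvPolynomial.pderiv_pow, hpdS]
    have h2 : (MvPolynomial.X 0 : MvPolynomial (Fin (m+2)) ℂ) ^ p *
        ((q : MvPolynomial (Fin (m+2)) ℂ) * S ^ (q - 1) * MvPolynomial.X 0 ^ (b : ℕ))
        = MvPolynomial.C (q : ℂ) * (MvPolynomial.X 0 ^ (p + (b : ℕ)) * S ^ (q - 1)) := by
      rw [show ((q : ℕ) : MvPolynomial (Fin (m+2)) ℂ) = MvPolynomial.C ((q : ℕ) : ℂ) from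
        (map_natCast MvPolynomial.C q).symm]
      ring
    rw [h2, MvPolynomial.coeff_C_mul]
  funext d
  set D : Fin (m + 2) →₀ ℕ := d.mapDomain Fin.succ with hD
  have hD0 : D 0 = 0 := by
    rw [hD]
    refine Finsupp.mapDomain_notin_range _ _ ?_
    rintro ⟨w, hw⟩
    exact Fin.succ_ne_zero w hw
  have hDsucc : ∀ b : Fin (m + 1), D b.succ = d b := fun b =>
    Finsupp.mapDomain_apply (Fin.succ_injective _) d b
  have hDsum : D.sum (fun _ x => x) = d.sum (fun _ x => x) := by
    rw [hD]
    exact Finsupp.sum_mapDomain_index (fun _ => rfl) (fun _ _ _ => rfl)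
  set dsum := d.sum (fun _ x => x) with hdsum
  set N := n + dsum + 1 with hN
  -- the shift evaluation
  have hshift : ∀ (A b : ℕ) (P : MvPolynomial (Fin (m + 2)) ℂ),
      MvPolynomial.coeff (Finsupp.single 0 A + D) (MvPolynomial.X 0 ^ b * P)
        = if b ≤ A then MvPolynomial.coeff (Finsupp.single 0 (A - b) + D) P else 0 := by
    intro A b P
    rw [coeff_X_pow_mul]
    by_cases h : b ≤ A
    · rw [if_pos h, if_pos]
      · congr 1
        ext w
        simp only [Finsupp.tsub_apply, Finsupp.add_apply, Finsupp.single_apply]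
        by_cases hw : (0 : Fin (m + 2)) = w
        · subst hw; rw [if_pos rfl, if_pos rfl, if_pos rfl, hD0]; omega
        · rw [if_neg hw, if_neg hw, if_neg hw]; omega
      · rw [Finsupp.le_def]
        intro w
        simp only [Finsupp.add_apply, Finsupp.single_apply]
        by_cases hw : (0 : Fin (m + 2)) = w
        · subst hw; rw [if_pos rfl, if_pos rfl]; omega
        · rw [if_neg hw, if_neg hw]; omega
    · rw [if_neg h, if_neg]
      intro hle
      apply h
      have := Finsupp.le_def.mp hle 0
      simpa [hD0] using this
  -- main computation
  have main : ∀ (a : ℕ), a ≤ m → ∀ (b : Fin (m + 1)),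
      MvPowerSeries.cpderiv b (k (n - 1 - a)) d
        = -∑ pq ∈ Finset.range N ×ˢ Finset.range N,
            MvPowerSeries.coeff (Finsupp.single 0 pq.1 + Finsupp.single 1 pq.2) f *
              ((pq.2 : ℂ) * (if pq.1 + (a + (b : ℕ)) + 1 ≤ n then
                MvPolynomial.coeff (Finsupp.single 0 (n - 1 - (a + (b : ℕ)) - pq.1) + D)
                  (S ^ (pq.2 - 1)) else 0)) := by
    intro a ha b
    have hx : MvPowerSeries.coeff (d + Finsupp.single b 1)
        (MvPowerSeries.xCoeff (n - 1 - a) (MvPowerSeries.subst2 (MvPowerSeries.X 0) SS f))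
        = MvPowerSeries.coeff
            (Finsupp.single 0 (n - 1 - a) + (d + Finsupp.single b 1).mapDomain Fin.succ)
            (MvPowerSeries.subst2 (MvPowerSeries.X 0) SS f) := rfl
    set E : Fin (m + 2) →₀ ℕ :=
      Finsupp.single 0 (n - 1 - a) + (d + Finsupp.single b 1).mapDomain Fin.succ with hE
    have hE' : E = (Finsupp.single 0 (n - 1 - a) + D) + Finsupp.single b.succ 1 := by
      rw [hE, Finsupp.mapDomain_add, Finsupp.mapDomain_single, ← hD]
      exact (add_assoc _ _ _).symm
    have hEb : (Finsupp.single (0 : Fin (m + 2)) (n - 1 - a) + D) b.succ = d b := by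
      rw [Finsupp.add_apply, Finsupp.single_apply, if_neg (Fin.succ_ne_zero b).symm, zero_add,
        hDsucc]
    have hEsum : E.sum (fun _ x => x) = (n - 1 - a) + dsum + 1 := by
      rw [hE', Finsupp.sum_add_index' (fun _ => rfl) (fun _ _ _ => rfl),
        Finsupp.sum_add_index' (fun _ => rfl) (fun _ _ _ => rfl),
        Finsupp.sum_single_index rfl, Finsupp.sum_single_index rfl, hDsum]
    have hsubst : MvPowerSeries.coeff E (MvPowerSeries.subst2 (MvPowerSeries.X 0) SS f)
        = ∑ pq ∈ Finset.range (E.sum (fun _ x => x) + 1) ×ˢ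
            Finset.range (E.sum (fun _ x => x) + 1),
            MvPowerSeries.coeff (Finsupp.single 0 pq.1 + Finsupp.single 1 pq.2) f *
              MvPowerSeries.coeff E ((MvPowerSeries.X 0) ^ pq.1 * SS ^ pq.2) := rfl
    have hrange : E.sum (fun _ x => x) + 1 ≤ N := by
      rw [hEsum, hN]; omega
    have hext : (∑ pq ∈ Finset.range (E.sum (fun _ x => x) + 1) ×ˢ
            Finset.range (E.sum (fun _ x => x) + 1),
            MvPowerSeries.coeff (Finsupp.single 0 pq.1 + Finsupp.single 1 pq.2) f *
              MvPowerSeries.coeff E ((MvPowerSeries.X 0) ^ pq.1 * SS ^ pq.2))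
        = ∑ pq ∈ Finset.range N ×ˢ Finset.range N,
            MvPowerSeries.coeff (Finsupp.single 0 pq.1 + Finsupp.single 1 pq.2) f *
              MvPowerSeries.coeff E ((MvPowerSeries.X 0) ^ pq.1 * SS ^ pq.2) := by
      apply Finset.sum_subset
      · exact Finset.product_subset_product (Finset.range_subset_range.mpr hrange)
          (Finset.range_subset_range.mpr hrange)
      · rintro ⟨p, q⟩ hbig hsmall
        simp only [Finset.mem_product, Finset.mem_range] at hbig hsmall
        have hpq : E.sum (fun _ x => x) < p + q := by omega
        rw [coeff_mul_pow_eq_zero (MvPowerSeries.constantCoeff_X 0) hSSc p q E hpq, mul_zero]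
    have hterm : ∀ p q : ℕ,
        ((d b : ℂ) + 1) * MvPowerSeries.coeff E ((MvPowerSeries.X 0) ^ p * SS ^ q)
          = (q : ℂ) * (if p + (a + (b : ℕ)) + 1 ≤ n then
              MvPolynomial.coeff (Finsupp.single 0 (n - 1 - (a + (b : ℕ)) - p) + D)
                (S ^ (q - 1)) else 0) := by
      intro p q
      have hb : (b : ℕ) ≤ m := Nat.lt_succ_iff.mp b.isLt
      rw [hcoe, MvPolynomial.coeff_coe, hE', ← hEb, ← coeff_pderiv, hstep, hshift]
      by_cases hcond : p + (b : ℕ) ≤ n - 1 - a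
      · rw [if_pos hcond, if_pos (show p + (a + (b : ℕ)) + 1 ≤ n by omega)]
        have harith : n - 1 - a - (p + (b : ℕ)) = n - 1 - (a + (b : ℕ)) - p := by omega
        rw [harith]
      · rw [if_neg hcond, if_neg (show ¬(p + (a + (b : ℕ)) + 1 ≤ n) by omega)]
    show ((d b : ℂ) + 1) * MvPowerSeries.coeff (d + Finsupp.single b 1) (k (n - 1 - a)) = _
    rw [hk, map_neg, hx, hsubst, hext, mul_neg, neg_inj, Finset.mul_sum]
    refine Finset.sum_congr rfl fun pq _ => ?_
    rw [← hterm pq.1 pq.2]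
    ring
  rw [main i hi, main j hj,
    show ((⟨j, by omega⟩ : Fin (m + 1)) : ℕ) = j from rfl,
    show ((⟨i, by omega⟩ : Fin (m + 1)) : ℕ) = i from rfl,
    Nat.add_comm i j]
end
end
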